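/- arXiv:math/0508591 — 2 statements merged into one kernel-verified Lean document; each statement's English description precedes it below -/
import Mathlib

section
/- Let A and B be arbitrary linear operators on an n-dimensional inner product space and let S(·) denote the vector of singular values in nonincreasing order. Then S(A+B) ≺_w S(A) + S(B), i.e. for each k, the sum of the k largest singular values of A+B is at most the sum of the k largest singular values of A plus the sum of the k largest singular values of B. -/
/-!
The sum of the `k` largest singular values of `M` is the maximum of `re ∑ᵢ ⟪uᵢ, M vᵢ⟫` over
orthonormal families `u`, `v` with at most `k` members (Ky Fan). The maximum is attained at singular
vectors. For the upper bound, expand `M v = ∑ⱼ σⱼ ⟪xⱼ, v⟫ wⱼ` (singular value decomposition): by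
AM-GM and Bessel's inequality the functional is at most `∑ⱼ σⱼ τⱼ` for weights `τⱼ ∈ [0, 1]` of
total mass at most `k`, and such a sum is largest with unit weight on the `k` largest `σⱼ`. The
functional is additive in `M`, so evaluating it at a maximiser for `A + B` gives the inequality.
-/

open Finset

/-- `s` is the listing, in nonincreasing order, of the singular values (with multiplicity)
of the matrix `A`, i.e. the square roots of the eigenvalues of `Aᴴ * A`. -/
def IsSingListDesc {n : ℕ} (A : Matrix (Fin n) (Fin n) ℂ) (s : Fin n → ℝ) : Prop :=
  Antitone s ∧ ∃ σ : Equiv.Perm (Fin n),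
    s = (fun i => Real.sqrt ((Matrix.isHermitian_conjTranspose_mul_self A).eigenvalues i)) ∘ σ

/-- Weak majorization `x ≺_w y`, with `y` in nonincreasing order. -/
def WeakMajDesc {m n : ℕ} (x : Fin m → ℝ) (y : Fin n → ℝ) : Prop :=
  ∀ t : Finset (Fin m),
    ∑ i ∈ t, x i ≤ ∑ i ∈ univ.filter (fun j : Fin n => (j : ℕ) < t.card), y i

open RCLike
open scoped InnerProductSpace

theorem sum_mul_le_sum_of_threshold {ι : Type*} [Fintype ι] {s τ : ι → ℝ} (T : Finset ι) {a : ℝ}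
    (ha : 0 ≤ a) (hT : ∀ i ∈ T, a ≤ s i) (hTc : ∀ i ∉ T, s i ≤ a)
    (hτ0 : ∀ i, 0 ≤ τ i) (hτ1 : ∀ i, τ i ≤ 1) (hτ : ∑ i, τ i ≤ #T) :
    ∑ i, s i * τ i ≤ ∑ i ∈ T, s i := by
  classical
  have hterm : ∀ i,
      s i * τ i ≤ (if i ∈ T then s i else 0) + a * (τ i - if i ∈ T then 1 else 0) := by
    intro i
    split_ifs with hi
    · nlinarith [mul_nonneg (sub_nonneg.2 (hT i hi)) (sub_nonneg.2 (hτ1 i))]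
    · nlinarith [mul_nonneg (sub_nonneg.2 (hTc i hi)) (hτ0 i)]
  calc ∑ i, s i * τ i
      ≤ ∑ i, ((if i ∈ T then s i else 0) + a * (τ i - if i ∈ T then 1 else 0)) :=
        sum_le_sum fun i _ => hterm i
    _ = ∑ i ∈ T, s i + a * (∑ i, τ i - #T) := by
        simp only [sum_add_distrib, ← mul_sum, sum_sub_distrib, sum_ite_mem, univ_inter]
        simp
    _ ≤ ∑ i ∈ T, s i := by nlinarith

theorem sum_mul_le_sum_filter_lt_of_antitone {n k : ℕ} {s τ : Fin n → ℝ} (hs : Antitone s)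
    (hs0 : ∀ j, 0 ≤ s j) (hτ0 : ∀ j, 0 ≤ τ j) (hτ1 : ∀ j, τ j ≤ 1) (hτ : ∑ j, τ j ≤ k) :
    ∑ j, s j * τ j ≤ ∑ j : Fin n with j.val < k, s j := by
  by_cases hkn : k < n
  · refine sum_mul_le_sum_of_threshold _ (hs0 ⟨k, hkn⟩) (fun j hj => hs ?_) (fun j hj => hs ?_)
      hτ0 hτ1 ?_
    · exact Fin.le_def.2 (mem_filter.1 hj).2.le
    · simpa [Fin.le_def] using hj
    · rwa [Fin.card_filter_val_lt, min_eq_right hkn.le]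
  · have hall : ∀ j : Fin n, (j : ℕ) < k := fun j => j.2.trans_le (not_lt.1 hkn)
    refine sum_mul_le_sum_of_threshold _ le_rfl (fun j _ => hs0 j) (by simp [hall]) hτ0 hτ1 ?_
    simpa [hall] using sum_le_sum fun j (_ : j ∈ univ) => hτ1 j

theorem sum_le_sum_filter_lt_card_of_antitone {n : ℕ} {s : Fin n → ℝ} (hs : Antitone s)
    (hs0 : ∀ j, 0 ≤ s j) (t : Finset (Fin n)) :
    ∑ i ∈ t, s i ≤ ∑ j : Fin n with j.val < #t, s j := by
  classical
  have := sum_mul_le_sum_filter_lt_of_antitone (k := #t) (τ := fun j => if j ∈ t then 1 else 0)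
    hs hs0 (fun j => by positivity) (fun j => by split_ifs <;> norm_num) (by simp)
  simpa [mul_ite, sum_ite_mem] using this

section Bessel

variable {𝕜 E F : Type*} [RCLike 𝕜] [NormedAddCommGroup E] [InnerProductSpace 𝕜 E]
  [NormedAddCommGroup F] [InnerProductSpace 𝕜 F]

theorem norm_sq_le_one_of_sum_norm_inner_sq_le {κ : Type*} [Fintype κ] {w : κ → E}
    (hw : ∀ y, ∑ j, ‖⟪w j, y⟫_𝕜‖ ^ 2 ≤ ‖y‖ ^ 2) (j : κ) : ‖w j‖ ^ 2 ≤ 1 := by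
  have hj : ‖⟪w j, w j⟫_𝕜‖ ^ 2 ≤ ‖w j‖ ^ 2 :=
    (single_le_sum (fun _ _ => by positivity) (mem_univ j)).trans (hw (w j))
  rw [inner_self_eq_norm_sq_to_K, norm_pow, norm_algebraMap', norm_norm] at hj
  nlinarith [sq_nonneg (‖w j‖ ^ 2)]

theorem exists_weights_re_sum_inner_le {ι κ : Type*} [Fintype ι] [Fintype κ] {x : κ → E}
    {w : κ → F} (hx : ∀ y, ∑ j, ‖⟪x j, y⟫_𝕜‖ ^ 2 ≤ ‖y‖ ^ 2)
    (hw : ∀ y, ∑ j, ‖⟪w j, y⟫_𝕜‖ ^ 2 ≤ ‖y‖ ^ 2) {s : κ → ℝ} (hs : ∀ j, 0 ≤ s j) {T : E → F}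
    (hT : ∀ v, T v = ∑ j, (s j * ⟪x j, v⟫_𝕜) • w j) {u : ι → F} {v : ι → E}
    (hu : Orthonormal 𝕜 u) (hv : Orthonormal 𝕜 v) :
    ∃ τ : κ → ℝ, (∀ j, 0 ≤ τ j) ∧ (∀ j, τ j ≤ 1) ∧ ∑ j, τ j ≤ Fintype.card ι ∧
      re (∑ i, ⟪u i, T (v i)⟫_𝕜) ≤ ∑ j, s j * τ j := by
  refine ⟨fun j => ∑ i, (‖⟪x j, v i⟫_𝕜‖ ^ 2 + ‖⟪w j, u i⟫_𝕜‖ ^ 2) / 2,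
    fun j => by positivity, fun j => ?_, ?_, ?_⟩
  · have hxv : ∑ i, ‖⟪x j, v i⟫_𝕜‖ ^ 2 ≤ 1 := by
      simp_rw [norm_inner_symm (x j)]
      exact (hv.sum_inner_products_le _).trans (norm_sq_le_one_of_sum_norm_inner_sq_le hx j)
    have hwu : ∑ i, ‖⟪w j, u i⟫_𝕜‖ ^ 2 ≤ 1 := by
      simp_rw [norm_inner_symm (w j)]
      exact (hu.sum_inner_products_le _).trans (norm_sq_le_one_of_sum_norm_inner_sq_le hw j)
    dsimp only
    rw [← sum_div, sum_add_distrib]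
    linarith
  · calc ∑ j, ∑ i, (‖⟪x j, v i⟫_𝕜‖ ^ 2 + ‖⟪w j, u i⟫_𝕜‖ ^ 2) / 2
        = ∑ i, (∑ j, ‖⟪x j, v i⟫_𝕜‖ ^ 2 + ∑ j, ‖⟪w j, u i⟫_𝕜‖ ^ 2) / 2 := by
          rw [sum_comm]
          simp only [← sum_div, sum_add_distrib]
      _ ≤ ∑ i, (‖v i‖ ^ 2 + ‖u i‖ ^ 2) / 2 := by gcongr with i <;> [exact hx _; exact hw _]
      _ = Fintype.card ι := by simp [hu.1, hv.1]
  · have hterm : ∀ i j, s j * re (⟪x j, v i⟫_𝕜 * ⟪u i, w j⟫_𝕜)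
        ≤ s j * ((‖⟪x j, v i⟫_𝕜‖ ^ 2 + ‖⟪w j, u i⟫_𝕜‖ ^ 2) / 2) := by
      intro i j
      refine mul_le_mul_of_nonneg_left ?_ (hs j)
      have hamgm := two_mul_le_add_sq ‖⟪x j, v i⟫_𝕜‖ ‖⟪w j, u i⟫_𝕜‖
      have hre := re_le_norm (⟪x j, v i⟫_𝕜 * ⟪u i, w j⟫_𝕜)
      rw [norm_mul, norm_inner_symm (u i)] at hre
      linarith
    calc re (∑ i, ⟪u i, T (v i)⟫_𝕜)
        = ∑ i, ∑ j, s j * re (⟪x j, v i⟫_𝕜 * ⟪u i, w j⟫_𝕜) := by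
          simp [hT, inner_sum, inner_smul_right, mul_assoc]
      _ ≤ ∑ i, ∑ j, s j * ((‖⟪x j, v i⟫_𝕜‖ ^ 2 + ‖⟪w j, u i⟫_𝕜‖ ^ 2) / 2) := by
          exact sum_le_sum fun i _ => sum_le_sum fun j _ => hterm i j
      _ = _ := by rw [sum_comm]; simp only [mul_sum]

end Bessel

namespace Matrix

variable {𝕜 m n : Type*} [RCLike 𝕜] [Fintype m] [Fintype n] [DecidableEq n] (M : Matrix m n 𝕜)

/-- `M xⱼ / σⱼ` for the eigenbasis `xⱼ` of `Mᴴ * M`; the junk value `0⁻¹ = 0` makes it `0` when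
`σⱼ = 0`. -/
noncomputable def leftSingularVector (j : n) : EuclideanSpace 𝕜 m :=
  ((√((isHermitian_conjTranspose_mul_self M).eigenvalues j) : ℝ) : 𝕜)⁻¹ •
    toEuclideanLin M ((isHermitian_conjTranspose_mul_self M).eigenvectorBasis j)

theorem inner_toEuclideanLin_eigenvectorBasis (i j : n) :
    ⟪toEuclideanLin M ((isHermitian_conjTranspose_mul_self M).eigenvectorBasis i),
      toEuclideanLin M ((isHermitian_conjTranspose_mul_self M).eigenvectorBasis j)⟫_𝕜 =
      if i = j then ((isHermitian_conjTranspose_mul_self M).eigenvalues j : 𝕜) else 0 := by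
  classical
  set hM := isHermitian_conjTranspose_mul_self M
  have heig : toEuclideanLin Mᴴ (toEuclideanLin M (hM.eigenvectorBasis j)) =
      (hM.eigenvalues j : 𝕜) • hM.eigenvectorBasis j := by
    rw [← LinearMap.comp_apply, ← toLpLin_mul_same, toLpLin_apply, hM.mulVec_eigenvectorBasis,
      RCLike.real_smul_eq_coe_smul (K := 𝕜)]
    rfl
  rw [← LinearMap.adjoint_inner_right, ← toEuclideanLin_conjTranspose_eq_adjoint, heig,
    inner_smul_right, orthonormal_iff_ite.1 hM.eigenvectorBasis.orthonormal]
  split_ifs <;> simp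

theorem toEuclideanLin_eigenvectorBasis (j : n) :
    toEuclideanLin M ((isHermitian_conjTranspose_mul_self M).eigenvectorBasis j) =
      ((√((isHermitian_conjTranspose_mul_self M).eigenvalues j) : ℝ) : 𝕜) •
        leftSingularVector M j := by
  set hM := isHermitian_conjTranspose_mul_self M
  by_cases hj : hM.eigenvalues j = 0
  · have hnorm := inner_toEuclideanLin_eigenvectorBasis M j j
    rw [if_pos rfl, hj, RCLike.ofReal_zero, inner_self_eq_zero] at hnorm
    simp [hnorm, hj]
  · have hsqrt : ((√(hM.eigenvalues j) : ℝ) : 𝕜) ≠ 0 := by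
      exact_mod_cast Real.sqrt_ne_zero'.2
        ((eigenvalues_conjTranspose_mul_self_nonneg M j).lt_of_ne' hj)
    rw [leftSingularVector, smul_smul, mul_inv_cancel₀ hsqrt, one_smul]

theorem leftSingularVector_eq_zero {j : n}
    (hj : (isHermitian_conjTranspose_mul_self M).eigenvalues j = 0) :
    leftSingularVector M j = 0 := by
  simp [leftSingularVector, hj]

theorem orthonormal_leftSingularVector :
    Orthonormal 𝕜 fun j : {j // (isHermitian_conjTranspose_mul_self M).eigenvalues j ≠ 0} =>
      leftSingularVector M j := by
  rw [orthonormal_iff_ite]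
  rintro ⟨i, hi⟩ ⟨j, hj⟩
  simp only [leftSingularVector, inner_smul_left, inner_smul_right,
    inner_toEuclideanLin_eigenvectorBasis, Subtype.mk.injEq]
  split_ifs with hij
  · subst hij
    have hsqrt : ((√((isHermitian_conjTranspose_mul_self M).eigenvalues i) : ℝ) : 𝕜) ≠ 0 := by
      exact_mod_cast Real.sqrt_ne_zero'.2
        ((eigenvalues_conjTranspose_mul_self_nonneg M i).lt_of_ne' hi)
    have hμ : (((isHermitian_conjTranspose_mul_self M).eigenvalues i : ℝ) : 𝕜) =
        ((√((isHermitian_conjTranspose_mul_self M).eigenvalues i) : ℝ) : 𝕜) *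
          ((√((isHermitian_conjTranspose_mul_self M).eigenvalues i) : ℝ) : 𝕜) := by
      rw [← ofReal_mul, Real.mul_self_sqrt (eigenvalues_conjTranspose_mul_self_nonneg M i)]
    rw [hμ, map_inv₀, conj_ofReal]
    field_simp
  · simp

theorem sum_norm_inner_leftSingularVector_sq_le (y : EuclideanSpace 𝕜 m) :
    ∑ j, ‖⟪leftSingularVector M j, y⟫_𝕜‖ ^ 2 ≤ ‖y‖ ^ 2 := by
  classical
  rw [← sum_filter_of_ne (p := fun j => (isHermitian_conjTranspose_mul_self M).eigenvalues j ≠ 0)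
    fun j _ hne hj => hne (by simp [leftSingularVector_eq_zero M hj]),
    ← sum_subtype_eq_sum_filter]
  exact (orthonormal_leftSingularVector M).sum_inner_products_le y

theorem toEuclideanLin_eq_sum (v : EuclideanSpace 𝕜 n) :
    toEuclideanLin M v =
      ∑ j, (((√((isHermitian_conjTranspose_mul_self M).eigenvalues j) : ℝ) : 𝕜) *
        ⟪(isHermitian_conjTranspose_mul_self M).eigenvectorBasis j, v⟫_𝕜) •
          leftSingularVector M j := by
  conv_lhs => rw [← (isHermitian_conjTranspose_mul_self M).eigenvectorBasis.sum_repr' v]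
  simp only [map_sum, map_smul, toEuclideanLin_eigenvectorBasis, smul_smul, mul_comm]

end Matrix

namespace IsSingListDesc

open Matrix

variable {n : ℕ} {M : Matrix (Fin n) (Fin n) ℂ} {s : Fin n → ℝ}

theorem nonneg (hs : IsSingListDesc M s) (j : Fin n) : 0 ≤ s j := by
  obtain ⟨-, σ, rfl⟩ := hs
  exact Real.sqrt_nonneg _

theorem re_sum_inner_le (hs : IsSingListDesc M s) {ι : Type*} [Fintype ι] {k : ℕ}
    (hk : Fintype.card ι ≤ k) {u v : ι → EuclideanSpace ℂ (Fin n)} (hu : Orthonormal ℂ u)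
    (hv : Orthonormal ℂ v) :
    re (∑ i, ⟪u i, toEuclideanLin M (v i)⟫_ℂ) ≤ ∑ j : Fin n with j.val < k, s j := by
  have hs0 := hs.nonneg
  obtain ⟨hanti, σ, rfl⟩ := hs
  obtain ⟨τ, hτ0, hτ1, hτ, hle⟩ := exists_weights_re_sum_inner_le
    (isHermitian_conjTranspose_mul_self M).eigenvectorBasis.orthonormal.sum_inner_products_le
    (sum_norm_inner_leftSingularVector_sq_le M) (fun j => Real.sqrt_nonneg _)
    (toEuclideanLin_eq_sum M) hu hv
  calc re (∑ i, ⟪u i, toEuclideanLin M (v i)⟫_ℂ)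
      ≤ ∑ j, √((isHermitian_conjTranspose_mul_self M).eigenvalues j) * τ j := hle
    _ = ∑ j, √((isHermitian_conjTranspose_mul_self M).eigenvalues (σ j)) * τ (σ j) :=
        (Equiv.sum_comp σ _).symm
    _ ≤ _ := sum_mul_le_sum_filter_lt_of_antitone hanti hs0 (fun j => hτ0 _) (fun j => hτ1 _)
        (by rw [Equiv.sum_comp σ τ]; exact hτ.trans (by exact_mod_cast hk))

theorem exists_orthonormal_re_sum_inner_eq (hs : IsSingListDesc M s) (k : ℕ) :
    ∃ t : Finset (Fin n), #t ≤ k ∧ ∃ u v : t → EuclideanSpace ℂ (Fin n),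
      Orthonormal ℂ u ∧ Orthonormal ℂ v ∧
      re (∑ i, ⟪u i, toEuclideanLin M (v i)⟫_ℂ) = ∑ j : Fin n with j.val < k, s j := by
  classical
  obtain ⟨-, σ, rfl⟩ := hs
  set hM := isHermitian_conjTranspose_mul_self M
  set t : Finset (Fin n) :=
    (univ.filter fun j : Fin n => j.val < k).filter fun j => √(hM.eigenvalues (σ j)) ≠ 0
  have hμ : ∀ i : t, hM.eigenvalues (σ i) ≠ 0 := fun i hi =>
    (mem_filter.1 i.2).2 (by simp [hi])
  refine ⟨t, (card_filter_le _ _).trans (by simp [Fin.card_filter_val_lt]),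
    fun i => leftSingularVector M (σ i), fun i => hM.eigenvectorBasis (σ i),
    (orthonormal_leftSingularVector M).comp (fun i : t => ⟨σ i, hμ i⟩)
      fun i j hij => Subtype.ext (σ.injective (congrArg Subtype.val hij)),
    hM.eigenvectorBasis.orthonormal.comp _ (σ.injective.comp Subtype.val_injective), ?_⟩
  have hterm : ∀ i : t, ⟪leftSingularVector M (σ i),
      toEuclideanLin M (hM.eigenvectorBasis (σ i))⟫_ℂ = (√(hM.eigenvalues (σ i)) : ℂ) := by
    intro i
    rw [toEuclideanLin_eigenvectorBasis, inner_smul_right, inner_self_eq_norm_sq_to_K,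
      ((orthonormal_leftSingularVector M).1 ⟨σ i, hμ i⟩ : _)]
    simp
  simp only [hterm]
  rw [← Complex.ofReal_sum, re_to_complex, Complex.ofReal_re,
    sum_coe_sort t fun j => √(hM.eigenvalues (σ j)), sum_filter_ne_zero]
  rfl

end IsSingListDesc

/-- `S(A+B) ≺_w S(A) + S(B)`: for each `k`, the sum of the `k` largest singular values of
`A+B` is at most the sum of the `k` largest singular values of `A` plus that of `B`. -/
theorem sing_add_weakMaj {n : ℕ} (A B : Matrix (Fin n) (Fin n) ℂ)
    (sA sB sAB : Fin n → ℝ)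
    (hsA : IsSingListDesc A sA) (hsB : IsSingListDesc B sB)
    (hsAB : IsSingListDesc (A + B) sAB) :
    WeakMajDesc sAB (sA + sB) := by
  intro t
  obtain ⟨t₀, ht₀, u, v, hu, hv, hAB⟩ := hsAB.exists_orthonormal_re_sum_inner_eq #t
  have hcard : Fintype.card t₀ ≤ #t := by simpa using ht₀
  calc ∑ i ∈ t, sAB i ≤ ∑ j : Fin n with j.val < #t, sAB j :=
        sum_le_sum_filter_lt_card_of_antitone hsAB.1 hsAB.nonneg t
    _ = re (∑ i, ⟪u i, Matrix.toEuclideanLin A (v i)⟫_ℂ) +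
          re (∑ i, ⟪u i, Matrix.toEuclideanLin B (v i)⟫_ℂ) := by
        rw [← hAB, ← map_add, ← sum_add_distrib]
        simp
    _ ≤ ∑ j : Fin n with j.val < #t, sA j + ∑ j : Fin n with j.val < #t, sB j :=
        add_le_add (hsA.re_sum_inner_le hcard hu hv) (hsB.re_sum_inner_le hcard hu hv)
    _ = ∑ j : Fin n with j.val < #t, (sA + sB) j := sum_add_distrib.symm
end

section
/- For Hermitian operators A, B on an n-dimensional inner product space, |Λ(A) − Λ(B)| ≺_w S(A−B), where Λ(·) is the vector of eigenvalues in nonincreasing order and S(·) is the vector of singular values in nonincreasing order. -/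
/-!
Lidskii's inequality `∑ i ∈ I, (λᵢ(T) - λᵢ(S)) ≤ ∑ j < #I, λⱼ(T - S)` is proved by cutting the
spectrum of `T - S` at a level `c` lying between its `#I` largest eigenvalues and the others. With
`Q = (T - S - c)⁺`, Weyl's monotonicity principle (Courant–Fischer) gives `λᵢ(T) ≤ λᵢ(S + Q) + c`
and `λᵢ(S) ≤ λᵢ(S + Q)`, while `∑ᵢ (λᵢ(S + Q) - λᵢ(S)) = tr Q = ∑ j < #I, (λⱼ(T - S) - c)`.

Split `t = t⁺ ⊔ t⁻` according to the sign of `λᵢ(A) - λᵢ(B)`. Lidskii for `(A, B)` on `t⁺` and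
for `(B, A)` on `t⁻` bounds `∑ i ∈ t, |λᵢ(A) - λᵢ(B)|` by the sum of the `#t⁺` largest eigenvalues
of `A - B` and the negatives of its `#t⁻` smallest ones. These are `#t` distinct entries of
`|Λ(A - B)|`, and `|Λ(A - B)|` is a rearrangement of `S(A - B)` because `A - B` is Hermitian.
-/

open Finset

/-- `μ` is the listing, in nonincreasing order, of the eigenvalues (with multiplicity)
of the Hermitian matrix `A`. -/
def IsEigListDesc {n : ℕ} (A : Matrix (Fin n) (Fin n) ℂ) (hA : A.IsHermitian)
    (μ : Fin n → ℝ) : Prop :=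
  Antitone μ ∧ ∃ σ : Equiv.Perm (Fin n), μ = hA.eigenvalues ∘ σ

open Module
open scoped InnerProductSpace

section Sorted

variable {α : Type*} {n : ℕ}

theorem Fin.eq_of_antitone_of_map_univ_val_eq [PartialOrder α] {f g : Fin n → α}
    (hf : Antitone f) (hg : Antitone g) (h : univ.val.map f = univ.val.map g) : f = g := by
  rw [Fin.univ_val_map, Fin.univ_val_map, Multiset.coe_eq_coe] at h
  exact List.ofFn_injective (h.eq_of_sortedGE hf.sortedGE_ofFn hg.sortedGE_ofFn)

theorem Fin.card_filter_val_lt_card (J : Finset (Fin n)) :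
    #({j : Fin n | (j : ℕ) < #J} : Finset (Fin n)) = #J := by
  rw [Fin.card_filter_val_lt, min_eq_right]
  simpa using J.card_le_univ

variable [AddCommMonoid α] [LinearOrder α] [IsOrderedAddMonoid α]

theorem Finset.sum_le_sum_of_forall_le_of_card_eq {ι : Type*} {s t : Finset ι} {f : ι → α}
    (hf : ∀ i ∈ s, ∀ j ∈ t, f i ≤ f j) (hst : #s = #t) : ∑ i ∈ s, f i ≤ ∑ j ∈ t, f j := by
  obtain rfl | ht := t.eq_empty_or_nonempty
  · simp_all
  calc ∑ i ∈ s, f i ≤ #s • t.inf' ht f :=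
        sum_le_card_nsmul _ _ _ fun i hi => le_inf' _ _ (hf i hi)
    _ = #t • t.inf' ht f := by rw [hst]
    _ ≤ ∑ j ∈ t, f j := card_nsmul_le_sum _ _ _ fun j hj => inf'_le _ hj

theorem Antitone.sum_le_sum_filter_val_lt_card {s : Fin n → α} (hs : Antitone s)
    (J : Finset (Fin n)) : ∑ i ∈ J, s i ≤ ∑ j ∈ {j : Fin n | (j : ℕ) < #J}, s j := by
  set K : Finset (Fin n) := {j | (j : ℕ) < #J}
  rw [← sum_inter_add_sum_sdiff J K, ← sum_inter_add_sum_sdiff K J, inter_comm]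
  gcongr 1
  -- every index of `J \ K` lies beyond every index of `K \ J`
  refine sum_le_sum_of_forall_le_of_card_eq (fun i hi j hj => hs ?_)
    (card_sdiff_comm (Fin.card_filter_val_lt_card J).symm)
  simp only [K, mem_sdiff, mem_filter, mem_univ, true_and, not_lt] at hi hj
  exact Fin.le_def.2 (by omega)

theorem Antitone.sum_le_sum_filter_val_lt_card_of_map_eq {f s : Fin n → α} (hs : Antitone s)
    (hfs : univ.val.map f = univ.val.map s) (J : Finset (Fin n)) :
    ∑ i ∈ J, f i ≤ ∑ j ∈ {j : Fin n | (j : ℕ) < #J}, s j := by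
  set σ := Tuple.sort (OrderDual.toDual ∘ f)
  have hσ : f ∘ σ = s := by
    refine Fin.eq_of_antitone_of_map_univ_val_eq (Tuple.monotone_sort (OrderDual.toDual ∘ f)) hs ?_
    rw [← hfs, ← Multiset.map_map, Multiset.map_univ_val_equiv]
  calc ∑ i ∈ J, f i = ∑ i ∈ J.map σ.symm.toEmbedding, s i := by simp [← hσ]
    _ ≤ _ := by simpa using hs.sum_le_sum_filter_val_lt_card (J.map σ.symm.toEmbedding)

end Sorted

theorem Antitone.sum_top_add_sum_bottom_le {α : Type*} [AddCommGroup α] [LinearOrder α]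
    [IsOrderedAddMonoid α] {n : ℕ} {f s : Fin n → α} (hs : Antitone s)
    (hfs : univ.val.map (|f ·|) = univ.val.map s) {p m : ℕ} (hpm : p + m ≤ n) :
    ∑ j ∈ {j : Fin n | (j : ℕ) < p}, f j + ∑ j ∈ {j : Fin n | (j : ℕ) < m}, -f j.rev ≤
      ∑ j ∈ {j : Fin n | (j : ℕ) < p + m}, s j := by
  set top : Finset (Fin n) := {j | (j : ℕ) < p}
  set bot := ({j : Fin n | (j : ℕ) < m} : Finset (Fin n)).map Fin.revPerm.toEmbedding
  have hdisj : Disjoint top bot := by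
    simp only [top, bot, disjoint_left, mem_filter, mem_univ, true_and, mem_map]
    rintro i hi ⟨j, hj, rfl⟩
    simp only [Equiv.coe_toEmbedding, Fin.revPerm_apply, Fin.val_rev] at hi
    omega
  have hcard : #(top ∪ bot) = p + m := by
    rw [card_union_of_disjoint hdisj, card_map, Fin.card_filter_val_lt, Fin.card_filter_val_lt]
    omega
  calc _ ≤ ∑ j ∈ top, |f j| + ∑ j ∈ bot, |f j| := by
        simp only [bot, sum_map]
        gcongr with j _ j _
        · exact le_abs_self _
        · exact neg_le_abs _
    _ = ∑ j ∈ top ∪ bot, |f j| := (sum_union hdisj).symm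
    _ ≤ _ := hcard ▸ hs.sum_le_sum_filter_val_lt_card_of_map_eq hfs _

theorem Finset.sum_abs_eq_sum_filter_add_sum_filter_not {ι α : Type*} [AddCommGroup α]
    [LinearOrder α] [IsOrderedAddMonoid α] (s : Finset ι) (f : ι → α) :
    ∑ i ∈ s, |f i| = ∑ i ∈ s with 0 ≤ f i, f i + ∑ i ∈ s with ¬0 ≤ f i, -f i := by
  rw [← sum_filter_add_sum_filter_not s (fun i => 0 ≤ f i)]
  congr 1 <;> refine sum_congr rfl fun i hi => ?_ <;> rw [mem_filter] at hi
  · exact abs_of_nonneg hi.2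
  · exact abs_of_neg (not_le.1 hi.2)

theorem Antitone.exists_sum_max_sub_eq {n : ℕ} {f : Fin n → ℝ} (hf : Antitone f) (k : ℕ) :
    ∃ c, ∑ j, max (f j - c) 0 = ∑ j ∈ {j : Fin n | (j : ℕ) < k}, (f j - c) := by
  obtain ⟨c, hc_top, hc_bot⟩ :
      ∃ c, (∀ j : Fin n, (j : ℕ) < k → c ≤ f j) ∧ ∀ j : Fin n, k ≤ (j : ℕ) → f j ≤ c := by
    rcases n with _ | n
    · exact ⟨0, fun j => j.elim0, fun j => j.elim0⟩
    refine ⟨f ⟨min k n, by omega⟩, fun j hj => hf ?_, fun j hj => hf ?_⟩ <;>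
      simp only [Fin.le_def] <;> omega
  refine ⟨c, ?_⟩
  rw [sum_filter]
  refine sum_congr rfl fun j _ => ?_
  split_ifs with hj
  · exact max_eq_left (sub_nonneg.2 (hc_top j hj))
  · exact max_eq_right (sub_nonpos.2 (hc_bot j (not_lt.1 hj)))

namespace OrthonormalBasis

variable {𝕜 E ι : Type*} [RCLike 𝕜] [NormedAddCommGroup E] [InnerProductSpace 𝕜 E] [Fintype ι]

theorem norm_sq_eq_sum (b : OrthonormalBasis ι 𝕜 E) (x : E) :
    ‖x‖ ^ 2 = ∑ i, ‖b.repr x i‖ ^ 2 := by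
  rw [← b.repr.norm_map, EuclideanSpace.norm_sq_eq]

theorem re_inner_apply_self_eq_sum (b : OrthonormalBasis ι 𝕜 E) {T : E →ₗ[𝕜] E} {μ : ι → ℝ}
    (hT : ∀ x i, b.repr (T x) i = μ i * b.repr x i) (x : E) :
    RCLike.re ⟪T x, x⟫_𝕜 = ∑ i, μ i * ‖b.repr x i‖ ^ 2 := by
  rw [← b.repr.inner_map_map, PiLp.inner_apply, map_sum]
  refine sum_congr rfl fun i _ => ?_
  rw [hT, ← smul_eq_mul, inner_smul_left, RCLike.conj_ofReal, RCLike.re_ofReal_mul,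
    inner_self_eq_norm_sq]

theorem exists_ne_zero_repr_eq_zero {n : ℕ} (b b' : OrthonormalBasis (Fin n) 𝕜 E) (i : Fin n) :
    ∃ x ≠ 0, (∀ j, i < j → b.repr x j = 0) ∧ ∀ j < i, b'.repr x j = 0 := by
  have : FiniteDimensional 𝕜 E := b.toBasis.finiteDimensional_of_finite
  let L : E →ₗ[𝕜] (Ioi i → 𝕜) × (Iio i → 𝕜) :=
    (LinearMap.pi fun j : Ioi i => b.toBasis.coord j).prod
      (LinearMap.pi fun j : Iio i => b'.toBasis.coord j)
  have hL : finrank 𝕜 ((Ioi i → 𝕜) × (Iio i → 𝕜)) < finrank 𝕜 E := by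
    rw [finrank_eq_card_basis b.toBasis, finrank_prod, finrank_fintype_fun_eq_card,
      finrank_fintype_fun_eq_card, Fintype.card_coe, Fintype.card_coe, Fin.card_Ioi, Fin.card_Iio,
      Fintype.card_fin]
    omega
  obtain ⟨x, hx, hx0⟩ :=
    Submodule.exists_mem_ne_zero_of_ne_bot (LinearMap.ker_ne_bot_of_finrank_lt (f := L) hL)
  simp only [L, LinearMap.ker_prod, Submodule.mem_inf, LinearMap.mem_ker, funext_iff,
    LinearMap.pi_apply, Basis.coord_apply, OrthonormalBasis.coe_toBasis_repr_apply, Pi.zero_apply,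
    Subtype.forall, mem_Ioi, mem_Iio] at hx
  exact ⟨x, hx0, hx⟩

variable [DecidableEq ι]

noncomputable def diagOp (b : OrthonormalBasis ι 𝕜 E) (μ : ι → ℝ) : E →ₗ[𝕜] E :=
  Matrix.toLin b.toBasis b.toBasis (Matrix.diagonal (RCLike.ofReal ∘ μ))

variable (b : OrthonormalBasis ι 𝕜 E) (μ : ι → ℝ)

theorem repr_diagOp_apply (x : E) (i : ι) : b.repr (b.diagOp μ x) i = μ i * b.repr x i := by
  simp [diagOp, Matrix.toLin_apply, Matrix.mulVec_diagonal, Pi.single_apply]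

theorem isSymmetric_diagOp : (b.diagOp μ).IsSymmetric :=
  (Matrix.isSymmetric_toLin_iff b).2 <| Matrix.isHermitian_diagonal_of_self_adjoint _ <| by
    ext i; simp

theorem trace_diagOp : LinearMap.trace 𝕜 E (b.diagOp μ) = ∑ i, (μ i : 𝕜) := by
  rw [LinearMap.trace_eq_matrix_trace 𝕜 b.toBasis, diagOp, LinearMap.toMatrix_toLin,
    Matrix.trace_diagonal]
  rfl

end OrthonormalBasis

namespace LinearMap.IsSymmetric

variable {𝕜 E : Type*} [RCLike 𝕜] [NormedAddCommGroup E] [InnerProductSpace 𝕜 E]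
  [FiniteDimensional 𝕜 E] {n : ℕ} (hn : finrank 𝕜 E = n) {T S : E →ₗ[𝕜] E}

theorem eigenvalues_mul_norm_sq_le_re_inner (hT : T.IsSymmetric) {i : Fin n} {x : E}
    (hx : ∀ j, i < j → (hT.eigenvectorBasis hn).repr x j = 0) :
    hT.eigenvalues hn i * ‖x‖ ^ 2 ≤ RCLike.re ⟪T x, x⟫_𝕜 := by
  rw [(hT.eigenvectorBasis hn).norm_sq_eq_sum, mul_sum,
    (hT.eigenvectorBasis hn).re_inner_apply_self_eq_sum (hT.eigenvectorBasis_apply_self_apply hn)]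
  refine sum_le_sum fun j _ => ?_
  rcases le_or_gt j i with hji | hij
  · exact mul_le_mul_of_nonneg_right (hT.eigenvalues_antitone hn hji) (sq_nonneg _)
  · simp [hx j hij]

theorem re_inner_le_eigenvalues_mul_norm_sq (hT : T.IsSymmetric) {i : Fin n} {x : E}
    (hx : ∀ j < i, (hT.eigenvectorBasis hn).repr x j = 0) :
    RCLike.re ⟪T x, x⟫_𝕜 ≤ hT.eigenvalues hn i * ‖x‖ ^ 2 := by
  rw [(hT.eigenvectorBasis hn).norm_sq_eq_sum, mul_sum,
    (hT.eigenvectorBasis hn).re_inner_apply_self_eq_sum (hT.eigenvectorBasis_apply_self_apply hn)]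
  refine sum_le_sum fun j _ => ?_
  rcases le_or_gt i j with hij | hji
  · exact mul_le_mul_of_nonneg_right (hT.eigenvalues_antitone hn hij) (sq_nonneg _)
  · simp [hx j hji]

theorem eigenvalues_le_add_of_re_inner_le (hT : T.IsSymmetric) (hS : S.IsSymmetric) {c : ℝ}
    (h : ∀ x, RCLike.re ⟪T x, x⟫_𝕜 ≤ RCLike.re ⟪S x, x⟫_𝕜 + c * ‖x‖ ^ 2) (i : Fin n) :
    hT.eigenvalues hn i ≤ hS.eigenvalues hn i + c := by
  obtain ⟨x, hx0, hxT, hxS⟩ :=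
    (hT.eigenvectorBasis hn).exists_ne_zero_repr_eq_zero (hS.eigenvectorBasis hn) i
  refine le_of_mul_le_mul_right ?_ (pow_pos (norm_pos_iff.2 hx0) 2)
  calc hT.eigenvalues hn i * ‖x‖ ^ 2 ≤ RCLike.re ⟪T x, x⟫_𝕜 :=
        hT.eigenvalues_mul_norm_sq_le_re_inner hn hxT
    _ ≤ RCLike.re ⟪S x, x⟫_𝕜 + c * ‖x‖ ^ 2 := h x
    _ ≤ (hS.eigenvalues hn i + c) * ‖x‖ ^ 2 := by
        rw [add_mul]
        gcongr
        exact hS.re_inner_le_eigenvalues_mul_norm_sq hn hxS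

theorem map_eigenvalues_univ_val_eq {ι : Type*} [Fintype ι] [DecidableEq ι] (hT : T.IsSymmetric)
    (b : Basis ι 𝕜 E) {μ : ι → ℝ} (hμ : ∀ i, T (b i) = (μ i : 𝕜) • b i) :
    univ.val.map (hT.eigenvalues hn) = univ.val.map μ := by
  have hmat : T.toMatrix b b = Matrix.diagonal (RCLike.ofReal ∘ μ) := by
    ext i j
    rcases eq_or_ne i j with rfl | hij
    · simp [toMatrix_apply, hμ, RCLike.real_smul_eq_coe_mul]
    · simp [toMatrix_apply, hμ, hij]
  have h := hT.roots_charpoly_eq_eigenvalues hn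
  rw [← T.charpoly_toMatrix b, hmat, Matrix.charpoly_diagonal, Polynomial.roots_prod _ _
    (prod_ne_zero_iff.2 fun i _ => Polynomial.X_sub_C_ne_zero _)] at h
  simp only [Polynomial.roots_X_sub_C, Multiset.bind_singleton] at h
  rw [← Multiset.map_map, ← Multiset.map_map] at h
  exact (Multiset.map_injective RCLike.ofReal_injective h).symm

theorem eigenvalues_eq_of_apply_eq_smul (hT : T.IsSymmetric) (b : Basis (Fin n) 𝕜 E)
    {μ : Fin n → ℝ} (hμ : Antitone μ) (hTb : ∀ i, T (b i) = (μ i : 𝕜) • b i) :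
    hT.eigenvalues hn = μ :=
  Fin.eq_of_antitone_of_map_univ_val_eq (hT.eigenvalues_antitone hn) hμ
    (hT.map_eigenvalues_univ_val_eq hn b hTb)

theorem eigenvalues_sub_comm (hT : T.IsSymmetric) (hS : S.IsSymmetric) :
    (hS.sub hT).eigenvalues hn = fun j => -(hT.sub hS).eigenvalues hn j.rev := by
  refine (hS.sub hT).eigenvalues_eq_of_apply_eq_smul hn
    (((hT.sub hS).eigenvectorBasis hn).reindex Fin.revPerm).toBasis
    (fun i j hij => neg_le_neg ((hT.sub hS).eigenvalues_antitone hn (Fin.rev_le_rev.2 hij)))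
    fun i => ?_
  rw [OrthonormalBasis.coe_toBasis, OrthonormalBasis.reindex_apply, Fin.revPerm_symm,
    Fin.revPerm_apply, ← neg_sub T S, LinearMap.neg_apply, (hT.sub hS).apply_eigenvectorBasis,
    RCLike.ofReal_neg, neg_smul]

theorem sum_eigenvalues_add_sub_eq_re_trace {Q : E →ₗ[𝕜] E} (hS : S.IsSymmetric)
    (hQ : Q.IsSymmetric) :
    ∑ i, ((hS.add hQ).eigenvalues hn i - hS.eigenvalues hn i) = RCLike.re (trace 𝕜 E Q) := by
  rw [sum_sub_distrib, ← re_trace_eq_sum_eigenvalues, ← re_trace_eq_sum_eigenvalues, map_add,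
    map_add, add_sub_cancel_left]

theorem sum_eigenvalues_sub_le (hT : T.IsSymmetric) (hS : S.IsSymmetric) (I : Finset (Fin n)) :
    ∑ i ∈ I, (hT.eigenvalues hn i - hS.eigenvalues hn i) ≤
      ∑ j ∈ {j : Fin n | (j : ℕ) < #I}, (hT.sub hS).eigenvalues hn j := by
  set b := (hT.sub hS).eigenvectorBasis hn
  set π := (hT.sub hS).eigenvalues hn
  obtain ⟨c, hcut⟩ := (hT.sub hS).eigenvalues_antitone hn |>.exists_sum_max_sub_eq #I
  set Q := b.diagOp fun j => max (π j - c) 0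
  have hSQ : (S + Q).IsSymmetric := hS.add (b.isSymmetric_diagOp _)
  have hQ : ∀ x, RCLike.re ⟪Q x, x⟫_𝕜 = ∑ j, max (π j - c) 0 * ‖b.repr x j‖ ^ 2 :=
    b.re_inner_apply_self_eq_sum (b.repr_diagOp_apply _)
  have hTS : ∀ x, RCLike.re ⟪T x, x⟫_𝕜 = RCLike.re ⟪S x, x⟫_𝕜 + ∑ j, π j * ‖b.repr x j‖ ^ 2 := by
    intro x
    rw [← b.re_inner_apply_self_eq_sum ((hT.sub hS).eigenvectorBasis_apply_self_apply hn),
      sub_apply, inner_sub_left, map_sub, add_sub_cancel]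
  have hT_le : ∀ i, hT.eigenvalues hn i ≤ hSQ.eigenvalues hn i + c := by
    refine hT.eigenvalues_le_add_of_re_inner_le hn hSQ fun x => ?_
    rw [hTS, add_apply, inner_add_left, map_add, hQ, b.norm_sq_eq_sum, mul_sum, add_assoc,
      ← sum_add_distrib]
    gcongr with j
    rw [← add_mul]
    gcongr
    linarith [le_max_left (π j - c) 0]
  have hS_le : ∀ i, hS.eigenvalues hn i ≤ hSQ.eigenvalues hn i := by
    have h : ∀ x, RCLike.re ⟪S x, x⟫_𝕜 ≤ RCLike.re ⟪(S + Q) x, x⟫_𝕜 + 0 * ‖x‖ ^ 2 := by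
      intro x
      rw [add_apply, inner_add_left, map_add, hQ, zero_mul, add_zero, le_add_iff_nonneg_right]
      exact sum_nonneg fun j _ => mul_nonneg (le_max_right _ _) (sq_nonneg _)
    simpa using hS.eigenvalues_le_add_of_re_inner_le hn hSQ h
  have htrace : ∑ i, (hSQ.eigenvalues hn i - hS.eigenvalues hn i) = ∑ j, max (π j - c) 0 := by
    rw [sum_eigenvalues_add_sub_eq_re_trace hn hS (b.isSymmetric_diagOp _), b.trace_diagOp, map_sum]
    simp
  calc ∑ i ∈ I, (hT.eigenvalues hn i - hS.eigenvalues hn i)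
      ≤ ∑ i ∈ I, ((hSQ.eigenvalues hn i - hS.eigenvalues hn i) + c) :=
        sum_le_sum fun i _ => by linarith [hT_le i]
    _ = ∑ i ∈ I, (hSQ.eigenvalues hn i - hS.eigenvalues hn i) + #I * c := by
        rw [sum_add_distrib, sum_const, nsmul_eq_mul]
    _ ≤ ∑ i, (hSQ.eigenvalues hn i - hS.eigenvalues hn i) + #I * c :=
        add_le_add_left (sum_le_sum_of_subset_of_nonneg (subset_univ I)
          fun i _ _ => sub_nonneg.2 (hS_le i)) _
    _ = ∑ j ∈ {j : Fin n | (j : ℕ) < #I}, π j := by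
        rw [htrace, hcut, sum_sub_distrib, sum_const, Fin.card_filter_val_lt_card, nsmul_eq_mul,
          sub_add_cancel]

end LinearMap.IsSymmetric

namespace Matrix.IsHermitian

variable {𝕜 : Type*} [RCLike 𝕜] {n : ℕ} {A : Matrix (Fin n) (Fin n) 𝕜}

theorem map_eigenvalues_univ_val_eq (hA : A.IsHermitian) :
    univ.val.map hA.eigenvalues = univ.val.map
      ((isSymmetric_toEuclideanLin_iff.2 hA).eigenvalues finrank_euclideanSpace_fin) := by
  refine ((isSymmetric_toEuclideanLin_iff.2 hA).map_eigenvalues_univ_val_eq _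
    hA.eigenvectorBasis.toBasis fun i => ?_).symm
  rw [OrthonormalBasis.coe_toBasis, toLpLin_apply, hA.mulVec_eigenvectorBasis,
    RCLike.real_smul_eq_coe_smul (K := 𝕜)]
  rfl

theorem map_sqrt_eigenvalues_conjTranspose_mul_self (hA : A.IsHermitian) :
    univ.val.map (fun i => √((isHermitian_conjTranspose_mul_self A).eigenvalues i)) =
      univ.val.map fun i =>
        |(isSymmetric_toEuclideanLin_iff.2 hA).eigenvalues finrank_euclideanSpace_fin i| := by
  set hT := isSymmetric_toEuclideanLin_iff.2 hA
  have hsq : univ.val.map (isHermitian_conjTranspose_mul_self A).eigenvalues =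
      univ.val.map (fun i => hT.eigenvalues finrank_euclideanSpace_fin i ^ 2) := by
    rw [map_eigenvalues_univ_val_eq]
    refine (isSymmetric_toEuclideanLin_iff.2 (isHermitian_conjTranspose_mul_self A)
      ).map_eigenvalues_univ_val_eq _ (hT.eigenvectorBasis finrank_euclideanSpace_fin).toBasis
      fun i => ?_
    rw [hA.eq, toLpLin_mul _ 2, OrthonormalBasis.coe_toBasis, LinearMap.comp_apply,
      hT.apply_eigenvectorBasis, map_smul, hT.apply_eigenvectorBasis, smul_smul,
      ← RCLike.ofReal_mul, sq]
  simpa [Multiset.map_map, Function.comp_def, Real.sqrt_sq_eq_abs] using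
    congr_arg (Multiset.map Real.sqrt) hsq

end Matrix.IsHermitian

theorem IsEigListDesc.eq_eigenvalues {n : ℕ} {A : Matrix (Fin n) (Fin n) ℂ} {hA : A.IsHermitian}
    {a : Fin n → ℝ} (ha : IsEigListDesc A hA a) :
    a = (Matrix.isSymmetric_toEuclideanLin_iff.2 hA).eigenvalues finrank_euclideanSpace_fin := by
  obtain ⟨ha_anti, σ, rfl⟩ := ha
  refine Fin.eq_of_antitone_of_map_univ_val_eq ha_anti
    (LinearMap.IsSymmetric.eigenvalues_antitone _ _) ?_
  rw [← Multiset.map_map, Multiset.map_univ_val_equiv, hA.map_eigenvalues_univ_val_eq]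

theorem IsSingListDesc.map_univ_val_eq {n : ℕ} {A : Matrix (Fin n) (Fin n) ℂ} (hA : A.IsHermitian)
    {s : Fin n → ℝ} (hs : IsSingListDesc A s) :
    (univ.val.map fun i =>
        |(Matrix.isSymmetric_toEuclideanLin_iff.2 hA).eigenvalues finrank_euclideanSpace_fin i|) =
      univ.val.map s := by
  obtain ⟨-, σ, rfl⟩ := hs
  rw [← Multiset.map_map, Multiset.map_univ_val_equiv,
    hA.map_sqrt_eigenvalues_conjTranspose_mul_self]

/-- `|Λ(A) − Λ(B)| ≺_w S(A − B)` for Hermitian `A`, `B`. -/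
theorem abs_eig_sub_weakMaj_sing {n : ℕ} (A B : Matrix (Fin n) (Fin n) ℂ)
    (hA : A.IsHermitian) (hB : B.IsHermitian)
    (a b sAB : Fin n → ℝ)
    (ha : IsEigListDesc A hA a) (hb : IsEigListDesc B hB b)
    (hsAB : IsSingListDesc (A - B) sAB) :
    WeakMajDesc (fun i => |a i - b i|) sAB := by
  have hn : finrank ℂ (EuclideanSpace ℂ (Fin n)) = n := finrank_euclideanSpace_fin
  set hTA := Matrix.isSymmetric_toEuclideanLin_iff.2 hA
  set hTB := Matrix.isSymmetric_toEuclideanLin_iff.2 hB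
  have hs := hsAB.map_univ_val_eq (hA.sub hB)
  -- `toEuclideanLin (A - B)` is not syntactically `toEuclideanLin A - toEuclideanLin B`
  rw [← (LinearMap.IsSymmetric.eigenvalues_eq_eigenvalues_iff (hTA.sub hTB) hn _ hn).2
    (by rw [map_sub])] at hs
  obtain rfl := ha.eq_eigenvalues
  obtain rfl := hb.eq_eigenvalues
  intro t
  set tp := t.filter fun i => 0 ≤ hTA.eigenvalues hn i - hTB.eigenvalues hn i
  set tm := t.filter fun i => ¬0 ≤ hTA.eigenvalues hn i - hTB.eigenvalues hn i
  have hcard : #tp + #tm = #t := card_filter_add_card_filter_not _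
  have hp := hTA.sum_eigenvalues_sub_le hn hTB tp
  have hm := hTB.sum_eigenvalues_sub_le hn hTA tm
  rw [hTA.eigenvalues_sub_comm hn hTB] at hm
  calc ∑ i ∈ t, _ = _ := sum_abs_eq_sum_filter_add_sum_filter_not _ _
    _ ≤ _ := add_le_add hp (by simpa only [neg_sub] using hm)
    _ ≤ _ := hsAB.1.sum_top_add_sum_bottom_le hs (by rw [hcard]; simpa using t.card_le_univ)
    _ = _ := by rw [hcard]
end
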